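/- Let A be an acyclic simple digraph on {1,…,n} (n ≥ 2) and let α ∈ ⟨A⟩. Then ℓ(A, α) ≤ Σ_{v=1}^{n} ψ_A(v, vα), where ψ_A(u, w) denotes the maximal number of edges of a directed path in A from u to w (with ψ_A(u, u) = 0). -/

import Mathlib

noncomputable section

variable {V : Type*}

/-- The arc `(a→b)`: the map sending `a` to `b` and fixing every other point. -/
def arcMap [DecidableEq V] (a b : V) : V → V := fun x => if x = a then b else x

/-- Evaluate a word of arcs, applying the arcs from left to right. -/
def wordEval [DecidableEq V] (w : List (V × V)) : V → V :=
  fun x => w.foldl (fun y e => arcMap e.1 e.2 y) x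

/-- `α ∈ ⟨D⟩`: `α` is a (nonempty) product of arcs of the digraph `D`. -/
def InGen [DecidableEq V] (D : V → V → Prop) (α : V → V) : Prop :=
  ∃ w : List (V × V), w ≠ [] ∧ (∀ e ∈ w, D e.1 e.2) ∧ wordEval w = α

/-- `ℓ(D, α)`: the minimal length of a word in the arcs of `D` expressing `α`. -/
def arcLen [DecidableEq V] (D : V → V → Prop) (α : V → V) : ℕ :=
  sInf {k | ∃ w : List (V × V), w.length = k ∧ (∀ e ∈ w, D e.1 e.2) ∧ wordEval w = α}

/-- `fix(α)`: the number of fixed points of `α`. -/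
def fixCnt (α : V → V) : ℕ := Set.ncard {x | α x = x}

/-- `rk(α)`: the rank of `α`, i.e. the cardinality of its image. -/
def rnk (α : V → V) : ℕ := Set.ncard (Set.range α)

/-- A set `C` is a cyclic orbit of `α` if it is a weakly connected component of the
functional digraph of `α` (edges `(x, α x)`) which is a directed cycle on at least two
vertices: equivalently, `C` is the forward orbit of a periodic point, has at least two
elements, and is closed under taking preimages. -/
def IsCyclicOrbit (α : V → V) (C : Set V) : Prop :=
  2 ≤ C.ncard ∧ (∃ x ∈ C, (∃ k, 0 < k ∧ α^[k] x = x) ∧ C = {y | ∃ k, α^[k] x = y}) ∧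
    ∀ y : V, α y ∈ C → y ∈ C

/-- `cycl(α)`: the number of cyclic orbits of `α`. -/
def cyclCnt (α : V → V) : ℕ := Set.ncard {C : Set V | IsCyclicOrbit α C}

/-- `D` is connected: any two vertices are joined by a directed path in some direction. -/
def ConnectedDigraph (D : V → V → Prop) : Prop :=
  ∀ u v : V, Relation.ReflTransGen D u v ∨ Relation.ReflTransGen D v u

/-- `D` is closed (equal to its closure): whenever `(b,a)` is an edge lying on a directed
cycle of `D` (i.e. there is a directed path from `a` back to `b`), `(a,b)` is also an edge. -/
def ClosedDigraph (D : V → V → Prop) : Prop :=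
  ∀ a b : V, D b a → Relation.ReflTransGen D a b → D a b

/-- Property (★): if `v0, v1, v2` is a directed path with `d_D(v0,v2) = 2`, then every
out-neighbour of `v1` and of `v2` lies in `{v0, v1, v2}`. -/
def StarCond (D : V → V → Prop) : Prop :=
  ∀ v0 v1 v2 : V, D v0 v1 → D v1 v2 → v0 ≠ v2 → ¬ D v0 v2 →
    ∀ u : V, (D v1 u ∨ D v2 u) → (u = v0 ∨ u = v1 ∨ u = v2)

/-- `C` is a strong component of `D`. -/
def IsSC (D : V → V → Prop) (C : Set V) : Prop :=
  ∃ v : V, C = {u | Relation.ReflTransGen D u v ∧ Relation.ReflTransGen D v u}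

/-- `C1` connects to `C2`: some edge goes from `C1` to `C2`. -/
def ConnectsTo (D : V → V → Prop) (C1 C2 : Set V) : Prop :=
  ∃ v1 ∈ C1, ∃ v2 ∈ C2, D v1 v2

/-- `C1` fully connects to `C2`: all pairs are edges. -/
def FullyConnects (D : V → V → Prop) (C1 C2 : Set V) : Prop :=
  ∀ v1 ∈ C1, ∀ v2 ∈ C2, D v1 v2

/-- A terminal strong component: it connects to no other strong component. -/
def IsTerminalSC (D : V → V → Prop) (C : Set V) : Prop :=
  IsSC D C ∧ ∀ C' : Set V, IsSC D C' → C' ≠ C → ¬ ConnectsTo D C C'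

/-- Property (★★): nonterminal strong components have at most 2 vertices and terminal
strong components have at most 3 vertices. -/
def StarStarCond (D : V → V → Prop) : Prop :=
  ∀ C : Set V, IsSC D C →
    (IsTerminalSC D C → C.ncard ≤ 3) ∧ (¬ IsTerminalSC D C → C.ncard ≤ 2)

/-- The induced subdigraph on `C` is an undirected path `a - b - c` on three vertices. -/
def IsP3 (D : V → V → Prop) (C : Set V) : Prop :=
  ∃ a b c : V, a ≠ b ∧ b ≠ c ∧ a ≠ c ∧ C = {a, b, c} ∧
    ∀ u ∈ C, ∀ w ∈ C,
      (D u w ↔ (u = a ∧ w = b) ∨ (u = b ∧ w = a) ∨ (u = b ∧ w = c) ∨ (u = c ∧ w = b))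

/-- `D` has a subdigraph isomorphic to `H`: an injection mapping edges of `H` to edges of `D`. -/
def HasSubdigraph (D : V → V → Prop) {m : ℕ} (H : Fin m → Fin m → Prop) : Prop :=
  ∃ f : Fin m → V, Function.Injective f ∧ ∀ i j : Fin m, H i j → D (f i) (f j)

/-- `Θ_k`: the directed cycle on `k` vertices. -/
def Theta (k : ℕ) : Fin k → Fin k → Prop := fun i j => (j : ℕ) = ((i : ℕ) + 1) % k

/-- `Γ1` (vertices relabelled from `{1,…,5}` to `{0,…,4}`). -/
def Gamma1 : Fin 5 → Fin 5 → Prop := fun i j =>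
  ((i : ℕ), (j : ℕ)) ∈ [(0,3),(3,0),(1,3),(3,1),(2,3),(3,2),(3,4)]

/-- `Γ2` (vertices relabelled from `{1,…,5}` to `{0,…,4}`). -/
def Gamma2 : Fin 5 → Fin 5 → Prop := fun i j =>
  ((i : ℕ), (j : ℕ)) ∈ [(0,2),(2,0),(1,2),(2,1),(2,3),(3,2),(3,4)]

/-- `Γ3` (vertices relabelled from `{1,…,4}` to `{0,…,3}`). -/
def Gamma3 : Fin 4 → Fin 4 → Prop := fun i j =>
  ((i : ℕ), (j : ℕ)) ∈ [(0,1),(1,2),(2,0),(2,3)]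

/-- `Γ4` (vertices relabelled from `{1,…,5}` to `{0,…,4}`). -/
def Gamma4 : Fin 5 → Fin 5 → Prop := fun i j =>
  ((i : ℕ), (j : ℕ)) ∈ [(0,1),(1,2),(2,3),(3,0),(3,4)]

/-- No subdigraph isomorphic to `Γ1`, `Γ2`, `Γ3`, `Γ4` or `Θ_k` for `k ≥ 5`. -/
def ForbiddenFree (D : V → V → Prop) : Prop :=
  ¬ HasSubdigraph D Gamma1 ∧ ¬ HasSubdigraph D Gamma2 ∧ ¬ HasSubdigraph D Gamma3 ∧
    ¬ HasSubdigraph D Gamma4 ∧ ∀ k : ℕ, 5 ≤ k → ¬ HasSubdigraph D (Theta k)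

/-- `D` is acyclic: it has no directed cycle. -/
def AcyclicRel (D : V → V → Prop) : Prop := ∀ v : V, ¬ Relation.TransGen D v v

/-- `ψ_A(u,w)`: the maximal number of edges of a directed path from `u` to `w` in `A`
(in particular `ψ_A(u,u) = 0`). -/
def psiLongest (A : V → V → Prop) (u w : V) : ℕ :=
  sSup {l | ∃ p : List V, p.Chain' A ∧ p.Nodup ∧
    p.head? = some u ∧ p.getLast? = some w ∧ p.length = l + 1}

/-- `d_D(u,w)`: the minimal number of edges of a directed path from `u` to `w` in `D`. -/
def ddist (D : V → V → Prop) (u w : V) : ℕ :=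
  sInf {l | ∃ p : List V, p.Chain' D ∧ p.head? = some u ∧ p.getLast? = some w ∧
    p.length = l + 1}

/-- A tournament: no loops, and exactly one of `(u,v)`, `(v,u)` is an edge for `u ≠ v`. -/
def IsTournament (D : V → V → Prop) : Prop :=
  (∀ v : V, ¬ D v v) ∧ ∀ u v : V, u ≠ v → (D u v ∨ D v u) ∧ ¬ (D u v ∧ D v u)

/-- A strong (strongly connected) digraph. -/
def IsStrongDigraph (D : V → V → Prop) : Prop :=
  ∀ u v : V, Relation.ReflTransGen D u v

/-! Induct on a word for `α`. Appending an arc `(a→b)` to a word for `β` either leaves `β`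
unchanged (when `a ∉ im β`) or costs one letter; in the latter case some `x` with `xβ = a` now
goes to `b`, and `ψ(x, ·)` strictly increases because a longest path from `x` to `a` extended by
`b` is still a path (by acyclicity `b` is not on it). No other term of `Σ_v ψ(v, vβ)` decreases,
so the sum pays for the extra letter. -/

section ArcWords

variable {V : Type*} [DecidableEq V]

@[simp]
lemma arcMap_self (a b : V) : arcMap a b a = b := if_pos rfl

lemma arcMap_of_ne {a x : V} (b : V) (h : x ≠ a) : arcMap a b x = x := if_neg h

lemma wordEval_concat (w : List (V × V)) (e : V × V) (x : V) :
    wordEval (w ++ [e]) x = arcMap e.1 e.2 (wordEval w x) := by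
  simp [wordEval]

lemma arcLen_arcMap_comp_le {D : V → V → Prop} {w : List (V × V)} (hw : ∀ e ∈ w, D e.1 e.2)
    {a b : V} (hab : D a b) :
    arcLen D (arcMap a b ∘ wordEval w) ≤ arcLen D (wordEval w) + 1 := by
  obtain ⟨w', hlen, hw', hev⟩ := Nat.sInf_mem (⟨w.length, w, rfl, hw, rfl⟩ :
    {k | ∃ w' : List (V × V), w'.length = k ∧ (∀ e ∈ w', D e.1 e.2) ∧
      wordEval w' = wordEval w}.Nonempty)
  refine Nat.sInf_le ⟨w' ++ [(a, b)], by simp [hlen, arcLen], ?_, ?_⟩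
  · simp only [List.mem_append, List.mem_singleton]
    rintro e (he | rfl)
    exacts [hw' e he, hab]
  · funext x
    rw [wordEval_concat, hev]
    rfl

end ArcWords

section Paths

variable {V : Type*} {D : V → V → Prop}

def IsDipath (D : V → V → Prop) (u w : V) (p : List V) : Prop :=
  p.IsChain D ∧ p.Nodup ∧ p.head? = some u ∧ p.getLast? = some w

lemma psiLongest_eq_sSup (u w : V) :
    psiLongest D u w = sSup {l | ∃ p, IsDipath D u w p ∧ p.length = l + 1} := by
  simp only [psiLongest, IsDipath, and_assoc]
  rfl

lemma IsDipath.reflTransGen_of_mem {u w x : V} {p : List V} (hp : IsDipath D u w p)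
    (hx : x ∈ p) : Relation.ReflTransGen D x w :=
  hp.1.backwards_induction (Relation.ReflTransGen D · w) p (fun _ _ => .head)
    (fun hne => by rw [List.getLast_eq_iff_getLast?_eq_some hne |>.mpr hp.2.2.2]) x hx

lemma IsDipath.concat (hD : AcyclicRel D) {u a b : V} {p : List V} (hp : IsDipath D u a p)
    (hab : D a b) : IsDipath D u b (p ++ [b]) := by
  have hbp : b ∉ p := fun hb => hD b (.tail' (hp.reflTransGen_of_mem hb) hab)
  obtain ⟨hchain, hnodup, hhead, hlast⟩ := hp
  have hne : p ≠ [] := by rintro rfl; simp at hhead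
  refine ⟨List.isChain_append.mpr ⟨hchain, List.isChain_singleton b, ?_⟩,
    List.nodup_append.mpr ⟨hnodup, List.nodup_singleton b, ?_⟩,
    by rwa [List.head?_append_of_ne_nil _ hne], List.getLast?_concat⟩
  · simp_all
  · intro x hx y hy hxy
    rw [List.mem_singleton] at hy
    exact hbp (hy ▸ hxy ▸ hx)

lemma IsDipath.length_le_card [Fintype V] {u w : V} {p : List V} (hp : IsDipath D u w p) :
    p.length ≤ Fintype.card V :=
  hp.2.1.length_le_card

lemma bddAbove_dipath_lengths [Fintype V] (u w : V) :
    BddAbove {l | ∃ p, IsDipath D u w p ∧ p.length = l + 1} := by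
  refine ⟨Fintype.card V, ?_⟩
  rintro l ⟨p, hp, hlen⟩
  have := hp.length_le_card
  omega

lemma IsDipath.exists_length_eq_psiLongest [Fintype V] {u w : V} {p : List V}
    (hp : IsDipath D u w p) : ∃ q, IsDipath D u w q ∧ q.length = psiLongest D u w + 1 := by
  have hne : p ≠ [] := by rintro rfl; simp [IsDipath] at hp
  rw [psiLongest_eq_sSup]
  exact Nat.sSup_mem (s := {l | ∃ p, IsDipath D u w p ∧ p.length = l + 1})
    ⟨p.length - 1, p, hp, by grind [List.length_pos_iff]⟩ (bddAbove_dipath_lengths u w)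

lemma psiLongest_lt_of_isDipath [Fintype V] (hD : AcyclicRel D) {u a b : V} {p : List V}
    (hp : IsDipath D u a p) (hab : D a b) : psiLongest D u a < psiLongest D u b := by
  obtain ⟨q, hq, hlen⟩ := hp.exists_length_eq_psiLongest
  rw [psiLongest_eq_sSup u b, Nat.lt_iff_add_one_le]
  exact le_csSup (bddAbove_dipath_lengths u b) ⟨q ++ [b], hq.concat hD hab, by simp [hlen]⟩

end Paths

section Acyclic

variable {V : Type*} [DecidableEq V] {D : V → V → Prop}

lemma exists_isDipath_wordEval (hD : AcyclicRel D) {w : List (V × V)}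
    (hw : ∀ e ∈ w, D e.1 e.2) (x : V) : ∃ p, IsDipath D x (wordEval w x) p := by
  induction w using List.reverseRecOn with
  | nil => exact ⟨[x], List.isChain_singleton x, List.nodup_singleton x, rfl, rfl⟩
  | append_singleton w e ih =>
    obtain ⟨p, hp⟩ := ih fun e' he' => hw e' (by simp [he'])
    rw [wordEval_concat]
    by_cases hx : wordEval w x = e.1
    · rw [hx, arcMap_self]
      exact ⟨p ++ [e.2], (hx ▸ hp).concat hD (hw e (by simp))⟩
    · rw [arcMap_of_ne _ hx]
      exact ⟨p, hp⟩

lemma psiLongest_wordEval_lt_concat [Fintype V] (hD : AcyclicRel D) {w : List (V × V)}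
    (hw : ∀ e ∈ w, D e.1 e.2) {e : V × V} (he : D e.1 e.2) {v : V} (hv : wordEval w v = e.1) :
    psiLongest D v (wordEval w v) < psiLongest D v (wordEval (w ++ [e]) v) := by
  obtain ⟨p, hp⟩ := exists_isDipath_wordEval hD hw v
  rw [wordEval_concat, hv, arcMap_self]
  exact psiLongest_lt_of_isDipath hD (hv ▸ hp) he

lemma psiLongest_wordEval_le_concat [Fintype V] (hD : AcyclicRel D) {w : List (V × V)}
    (hw : ∀ e ∈ w, D e.1 e.2) {e : V × V} (he : D e.1 e.2) (v : V) :
    psiLongest D v (wordEval w v) ≤ psiLongest D v (wordEval (w ++ [e]) v) := by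
  by_cases hv : wordEval w v = e.1
  · exact (psiLongest_wordEval_lt_concat hD hw he hv).le
  · rw [wordEval_concat, arcMap_of_ne _ hv]

theorem arcLen_wordEval_le_sum_psiLongest [Fintype V] (hD : AcyclicRel D) {w : List (V × V)}
    (hw : ∀ e ∈ w, D e.1 e.2) :
    arcLen D (wordEval w) ≤ ∑ v, psiLongest D v (wordEval w v) := by
  induction w using List.reverseRecOn with
  | nil =>
    have hzero : arcLen D (wordEval ([] : List (V × V))) = 0 :=
      Nat.sInf_eq_zero.mpr (.inl ⟨[], rfl, by simp, rfl⟩)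
    exact hzero.trans_le (Nat.zero_le _)
  | append_singleton w e ih =>
    have hw' : ∀ e' ∈ w, D e'.1 e'.2 := fun e' he' => hw e' (by simp [he'])
    have he : D e.1 e.2 := hw e (by simp)
    by_cases hmoves : ∃ v, wordEval w v = e.1
    · obtain ⟨v₀, hv₀⟩ := hmoves
      have hsum : ∑ v, psiLongest D v (wordEval w v) <
          ∑ v, psiLongest D v (wordEval (w ++ [e]) v) :=
        Finset.sum_lt_sum (fun v _ => psiLongest_wordEval_le_concat hD hw' he v)
          ⟨v₀, Finset.mem_univ _, psiLongest_wordEval_lt_concat hD hw' he hv₀⟩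
      calc arcLen D (wordEval (w ++ [e]))
          = arcLen D (arcMap e.1 e.2 ∘ wordEval w) :=
            congrArg (arcLen D) (funext (wordEval_concat w e))
        _ ≤ arcLen D (wordEval w) + 1 := arcLen_arcMap_comp_le hw' he
        _ ≤ ∑ v, psiLongest D v (wordEval w v) + 1 := by gcongr; exact ih hw'
        _ ≤ ∑ v, psiLongest D v (wordEval (w ++ [e]) v) := hsum
    · simp only [not_exists] at hmoves
      have hfix : wordEval (w ++ [e]) = wordEval w :=
        funext fun x => by rw [wordEval_concat, arcMap_of_ne _ (hmoves x)]
      rw [hfix]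
      exact ih hw'

end Acyclic

theorem stmt15_general (n : ℕ) (A : Fin n → Fin n → Prop) (hA : AcyclicRel A)
    (α : Fin n → Fin n) (hα : InGen A α) :
    arcLen A α ≤ ∑ v : Fin n, psiLongest A v (α v) := by
  obtain ⟨w, -, hw, rfl⟩ := hα
  exact arcLen_wordEval_le_sum_psiLongest hA hw

/-- for an acyclic simple digraph `A` on `{1,…,n}` (`n ≥ 2`) and `α ∈ ⟨A⟩`,
`ℓ(A, α) ≤ Σ_v ψ_A(v, vα)`, where `ψ_A(u,w)` is the maximal number of edges of a directed
path from `u` to `w` in `A`. -/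
theorem stmt15 (n : ℕ) (hn : 2 ≤ n) (A : Fin n → Fin n → Prop) (hA : AcyclicRel A)
    (α : Fin n → Fin n) (hα : InGen A α) :
    arcLen A α ≤ ∑ v : Fin n, psiLongest A v (α v) :=
  stmt15_general n A hA α hα
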